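/- Let f = (1/N)∑_{m=1}^N f_m with each f_m : ℝ^d → ℝ differentiable, and let x* be a minimizer of f. If the expected smoothness condition holds with constant ℒ > 0, i.e. (1/N)∑_{m=1}^N ‖∇f_m(x) − ∇f_m(x*)‖² ≤ 2ℒ(f(x) − f(x*)) for all x, then the expected residual condition holds with the same constant: (1/N)∑_{m=1}^N ‖∇f_m(x) − ∇f_m(x*) − (∇f(x) − ∇f(x*))‖² ≤ 2ℒ(f(x) − f(x*)) for all x. If moreover f satisfies the Polyak–Łojasiewicz condition with constant μ relative to f* = f(x*), then the expected residual condition holds with the improved constant ℒ − μ: (1/N)∑_{m=1}^N ‖∇f_m(x) − ∇f_m(x*) − (∇f(x) − ∇f(x*))‖² ≤ 2(ℒ − μ)(f(x) − f(x*)) for all x. -/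

import Mathlib

/-!
Write `Gₘ = ∇fₘ(x) − ∇fₘ(x*)`. Since `∇f` is the average of the `∇fₘ`, the residuals are
`Gₘ − Ḡ` with `Ḡ = ∇f(x) − ∇f(x*)` the mean of the `Gₘ`, and the variance identity
`(1/N)∑‖Gₘ − Ḡ‖² = (1/N)∑‖Gₘ‖² − ‖Ḡ‖²` bounds the residual by the expected smoothness term.
At the minimizer `∇f(x*) = 0`, so `‖Ḡ‖² = ‖∇f(x)‖² ≥ 2μ(f(x) − f*)` under PL, which improves
the constant to `ℒ − μ`.
-/

open scoped RealInnerProductSpace BigOperators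

noncomputable section

def favg {N d : ℕ} (f : Fin N → EuclideanSpace ℝ (Fin d) → ℝ)
    (x : EuclideanSpace ℝ (Fin d)) : ℝ :=
  (N : ℝ)⁻¹ * ∑ m, f m x

open Finset

theorem inv_card_mul_sum_norm_sub_mean_sq {ι E : Type*} [Fintype ι] [NormedAddCommGroup E]
    [InnerProductSpace ℝ E] (G : ι → E) :
    (Fintype.card ι : ℝ)⁻¹ * ∑ i, ‖G i - (Fintype.card ι : ℝ)⁻¹ • ∑ j, G j‖ ^ 2
      = (Fintype.card ι : ℝ)⁻¹ * ∑ i, ‖G i‖ ^ 2 - ‖(Fintype.card ι : ℝ)⁻¹ • ∑ j, G j‖ ^ 2 := by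
  set n : ℝ := (Fintype.card ι : ℝ)
  set mean := n⁻¹ • ∑ j, G j
  rcases eq_or_ne n 0 with hn | hn
  · simp [mean, hn]
  have hsum : ∑ j, G j = n • mean := (smul_inv_smul₀ hn _).symm
  calc n⁻¹ * ∑ i, ‖G i - mean‖ ^ 2
      = n⁻¹ * (∑ i, ‖G i‖ ^ 2 - 2 * ⟪∑ i, G i, mean⟫ + n * ‖mean‖ ^ 2) := by
        simp only [norm_sub_sq_real, sum_add_distrib, sum_sub_distrib, ← mul_sum, sum_inner,
          sum_const, card_univ, nsmul_eq_mul, n]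
    _ = n⁻¹ * ∑ i, ‖G i‖ ^ 2 - ‖mean‖ ^ 2 := by
        rw [hsum, real_inner_smul_left, real_inner_self_eq_norm_sq]
        field_simp
        ring

theorem IsLocalMin.gradient_eq_zero {F : Type*} [NormedAddCommGroup F] [InnerProductSpace ℝ F]
    [CompleteSpace F] {f : F → ℝ} {a : F} (h : IsLocalMin f a) : gradient f a = 0 := by
  simp [gradient, h.fderiv_eq_zero]

theorem hasGradientAt_favg {N d : ℕ} {f : Fin N → EuclideanSpace ℝ (Fin d) → ℝ}
    {x : EuclideanSpace ℝ (Fin d)} (hdiff : ∀ m, DifferentiableAt ℝ (f m) x) :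
    HasGradientAt (favg f) ((N : ℝ)⁻¹ • ∑ m, gradient (f m) x) x := by
  rw [hasGradientAt_iff_hasFDerivAt, map_smul, map_sum]
  simp only [toDual_gradient]
  exact (HasFDerivAt.fun_sum fun m _ => (hdiff m).hasFDerivAt).const_mul _

theorem expected_residual_of_expected_smoothness_general
    {N d : ℕ} (f : Fin N → EuclideanSpace ℝ (Fin d) → ℝ)
    (hdiff : ∀ m, Differentiable ℝ (f m))
    (xstar : EuclideanSpace ℝ (Fin d)) (hmin : ∀ y, favg f xstar ≤ favg f y)
    (ℒ : ℝ)
    (hES : ∀ x, (N : ℝ)⁻¹ * ∑ m, ‖gradient (f m) x - gradient (f m) xstar‖ ^ 2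
      ≤ 2 * ℒ * (favg f x - favg f xstar)) :
    (∀ x, (N : ℝ)⁻¹ * ∑ m,
        ‖gradient (f m) x - gradient (f m) xstar
          - (gradient (favg f) x - gradient (favg f) xstar)‖ ^ 2
      ≤ 2 * ℒ * (favg f x - favg f xstar)) ∧
    (∀ μ : ℝ, 0 < μ →
      (∀ x, μ * (favg f x - favg f xstar) ≤ (1 / 2 : ℝ) * ‖gradient (favg f) x‖ ^ 2) →
      ∀ x, (N : ℝ)⁻¹ * ∑ m,
          ‖gradient (f m) x - gradient (f m) xstar
            - (gradient (favg f) x - gradient (favg f) xstar)‖ ^ 2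
        ≤ 2 * (ℒ - μ) * (favg f x - favg f xstar)) := by
  have hgrad_min : gradient (favg f) xstar = 0 :=
    IsLocalMin.gradient_eq_zero (Filter.Eventually.of_forall hmin)
  have variance : ∀ x, (N : ℝ)⁻¹ * ∑ m,
        ‖gradient (f m) x - gradient (f m) xstar
          - (gradient (favg f) x - gradient (favg f) xstar)‖ ^ 2
      = (N : ℝ)⁻¹ * ∑ m, ‖gradient (f m) x - gradient (f m) xstar‖ ^ 2
        - ‖gradient (favg f) x - gradient (favg f) xstar‖ ^ 2 := by
    intro x
    have hmean : gradient (favg f) x - gradient (favg f) xstar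
        = (N : ℝ)⁻¹ • ∑ m, (gradient (f m) x - gradient (f m) xstar) := by
      rw [(hasGradientAt_favg fun m => hdiff m x).gradient,
        (hasGradientAt_favg fun m => hdiff m xstar).gradient, sum_sub_distrib, smul_sub]
    simpa only [hmean, Fintype.card_fin] using
      inv_card_mul_sum_norm_sub_mean_sq fun m => gradient (f m) x - gradient (f m) xstar
  refine ⟨fun x => ?_, fun μ _ hPL x => ?_⟩
  · rw [variance x]
    linarith [hES x, sq_nonneg ‖gradient (favg f) x - gradient (favg f) xstar‖]
  · rw [variance x, hgrad_min, sub_zero]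
    linarith [hES x, hPL x]

theorem expected_residual_of_expected_smoothness
    {N d : ℕ} (hN : 0 < N) (f : Fin N → EuclideanSpace ℝ (Fin d) → ℝ)
    (hdiff : ∀ m, Differentiable ℝ (f m))
    (xstar : EuclideanSpace ℝ (Fin d)) (hmin : ∀ y, favg f xstar ≤ favg f y)
    (ℒ : ℝ) (hℒ : 0 < ℒ)
    (hES : ∀ x, (N : ℝ)⁻¹ * ∑ m, ‖gradient (f m) x - gradient (f m) xstar‖ ^ 2
      ≤ 2 * ℒ * (favg f x - favg f xstar)) :
    (∀ x, (N : ℝ)⁻¹ * ∑ m,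
        ‖gradient (f m) x - gradient (f m) xstar
          - (gradient (favg f) x - gradient (favg f) xstar)‖ ^ 2
      ≤ 2 * ℒ * (favg f x - favg f xstar)) ∧
    (∀ μ : ℝ, 0 < μ →
      (∀ x, μ * (favg f x - favg f xstar) ≤ (1 / 2 : ℝ) * ‖gradient (favg f) x‖ ^ 2) →
      ∀ x, (N : ℝ)⁻¹ * ∑ m,
          ‖gradient (f m) x - gradient (f m) xstar
            - (gradient (favg f) x - gradient (favg f) xstar)‖ ^ 2
        ≤ 2 * (ℒ - μ) * (favg f x - favg f xstar)) :=
  expected_residual_of_expected_smoothness_general f hdiff xstar hmin ℒ hES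

end
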